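/- arXiv:1604.04921 — 3 statements merged into one kernel-verified Lean document; each statement's English description precedes it below -/
import Mathlib

section
/- Let V be a real Hilbert space, a : V × V → ℝ a continuous, symmetric, positive semidefinite bilinear form with energy seminorm ⦀v⦀ := √(a(v,v)), and V_h ⊆ V a subspace. Let (u, u_h) and (p, p_h) be exact/Galerkin pairs: a(u, v) = F₁(v) and a(p, v) = F₂(v) for all v ∈ V, a(u_h, v_h) = F₁(v_h) and a(p_h, v_h) = F₂(v_h) for all v_h ∈ V_h. Let r, s ∈ V solve the adjoint problems a(v, r) = Q₁(v) and a(v, s) = Q₂(v) for all v ∈ V, with Q₁, Q₂ continuous linear functionals, and let r_h, s_h ∈ V_h be arbitrary. Then |Q₁(u − u_h) + Q₂(p − p_h)| ≤ ⦀u − u_h⦀·⦀r − r_h⦀ + ⦀p − p_h⦀·⦀s − s_h⦀. -/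
private lemma cs_aux {V : Type*} [NormedAddCommGroup V] [InnerProductSpace ℝ V]
    (a : V →L[ℝ] V →L[ℝ] ℝ) (hsymm : ∀ v w : V, a v w = a w v)
    (hpsd : ∀ v : V, 0 ≤ a v v) (x y : V) :
    |a x y| ≤ Real.sqrt (a x x) * Real.sqrt (a y y) := by
  have hq : ∀ t : ℝ, 0 ≤ a y y * (t * t) + (2 * a x y) * t + a x x := by
    intro t
    have := hpsd (x + t • y)
    simp only [map_add, map_smul, ContinuousLinearMap.add_apply,
      ContinuousLinearMap.smul_apply, smul_eq_mul] at this
    rw [hsymm y x] at this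
    nlinarith [this]
  have hd := discrim_le_zero hq
  have h1 : (a x y) ^ 2 ≤ a x x * a y y := by
    unfold discrim at hd; nlinarith
  calc |a x y| = Real.sqrt ((a x y) ^ 2) := by rw [Real.sqrt_sq_eq_abs]
    _ ≤ Real.sqrt (a x x * a y y) := Real.sqrt_le_sqrt h1
    _ = Real.sqrt (a x x) * Real.sqrt (a y y) := Real.sqrt_mul (hpsd x) _

/-- Guaranteed upper bound `Ē` for the (linearized) error in the shape
gradient: `|Q₁(u - u_h) + Q₂(p - p_h)| ≤ ⦀u - u_h⦀⦀r - r_h⦀ + ⦀p - p_h⦀⦀s - s_h⦀`,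
with the energy seminorm `⦀v⦀ = √(a(v,v))`. -/
theorem stmt_10 {V : Type*} [NormedAddCommGroup V] [InnerProductSpace ℝ V]
    [CompleteSpace V] (a : V →L[ℝ] V →L[ℝ] ℝ)
    (hsymm : ∀ v w : V, a v w = a w v) (hpsd : ∀ v : V, 0 ≤ a v v)
    (Vh : Submodule ℝ V) (F₁ F₂ Q₁ Q₂ : V →L[ℝ] ℝ) (u uh p ph r s : V)
    (hu : ∀ v : V, a u v = F₁ v)
    (hp : ∀ v : V, a p v = F₂ v)
    (huh : uh ∈ Vh) (huh' : ∀ vh ∈ Vh, a uh vh = F₁ vh)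
    (hph : ph ∈ Vh) (hph' : ∀ vh ∈ Vh, a ph vh = F₂ vh)
    (hr : ∀ v : V, a v r = Q₁ v)
    (hs : ∀ v : V, a v s = Q₂ v) :
    ∀ rh ∈ Vh, ∀ sh ∈ Vh,
      |Q₁ (u - uh) + Q₂ (p - ph)| ≤
        Real.sqrt (a (u - uh) (u - uh)) * Real.sqrt (a (r - rh) (r - rh)) +
        Real.sqrt (a (p - ph) (p - ph)) * Real.sqrt (a (s - sh) (s - sh)) := by
  intro rh hrh sh hsh
  have hQ1 : Q₁ (u - uh) = a (u - uh) (r - rh) := by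
    have galerkin : a (u - uh) rh = 0 := by
      have h1 : a rh u = F₁ rh := by rw [hsymm]; exact hu rh
      have h2 : a rh uh = F₁ rh := by rw [hsymm]; exact huh' rh hrh
      simp only [map_sub, ContinuousLinearMap.sub_apply]
      rw [hsymm u rh, hsymm uh rh, h1, h2, sub_self]
    have := hr (u - uh)
    simp only [map_sub, ContinuousLinearMap.sub_apply] at *
    linarith
  have hQ2 : Q₂ (p - ph) = a (p - ph) (s - sh) := by
    have galerkin : a (p - ph) sh = 0 := by
      have h1 : a sh p = F₂ sh := by rw [hsymm]; exact hp sh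
      have h2 : a sh ph = F₂ sh := by rw [hsymm]; exact hph' sh hsh
      simp only [map_sub, ContinuousLinearMap.sub_apply]
      rw [hsymm p sh, hsymm ph sh, h1, h2, sub_self]
    have := hs (p - ph)
    simp only [map_sub, ContinuousLinearMap.sub_apply] at *
    linarith
  rw [hQ1, hQ2]
  calc |a (u - uh) (r - rh) + a (p - ph) (s - sh)|
      ≤ |a (u - uh) (r - rh)| + |a (p - ph) (s - sh)| := abs_add_le _ _
    _ ≤ _ := add_le_add (cs_aux a hsymm hpsd _ _) (cs_aux a hsymm hpsd _ _)
end

section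
/- Let V and H be real Hilbert spaces and G : V → H a continuous linear map, and define the energy bilinear form a(v, w) := ⟨Gv, Gw⟩_H + ⟨v, w⟩_V. Let F : V → ℝ be a continuous linear functional, u ∈ V the exact solution with a(u, v) = F(v) for all v ∈ V, and u_h ∈ V arbitrary. Suppose (σ, d) ∈ H × V is an equilibrated dual pair, i.e. ⟨σ, Gv⟩_H + ⟨d, v⟩_V = F(v) for all v ∈ V. Then the energy-norm error satisfies the fully computable, constant-free bound a(u − u_h, u − u_h) ≤ ‖σ − G u_h‖²_H + ‖d − u_h‖²_V. -/
/-!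
Prager–Synge (hypercircle) argument. In `H × V` with the product inner product, the pair
`(σ - G u, d - u)` is orthogonal to every `(G v, v)`, since both `u` and `(σ, d)` represent `F`.
Writing `(σ - G u_h, d - u_h) = (σ - G u, d - u) + (G e, e)` with `e = u - u_h`, Pythagoras gives
`‖σ - G u_h‖² + ‖d - u_h‖² = ‖σ - G u‖² + ‖d - u‖² + a(e, e)`, which dominates `a(e, e)`.
-/

open scoped RealInnerProductSpace

section Hypercircle

variable {V H : Type*} [NormedAddCommGroup V] [InnerProductSpace ℝ V]
  [NormedAddCommGroup H] [InnerProductSpace ℝ H]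

theorem norm_add_sq_add_norm_add_sq_of_inner_add_inner_eq_zero {x y : H} {x' y' : V}
    (h : ⟪x, y⟫ + ⟪x', y'⟫ = 0) :
    ‖x + y‖ ^ 2 + ‖x' + y'‖ ^ 2 = (‖x‖ ^ 2 + ‖x'‖ ^ 2) + (‖y‖ ^ 2 + ‖y'‖ ^ 2) := by
  rw [norm_add_sq_real, norm_add_sq_real]
  linarith

variable (G : V →L[ℝ] H) (F : V →L[ℝ] ℝ) {u d : V} {σ : H}

theorem inner_residual_add_inner_residual_eq_zero
    (hu : ∀ v, ⟪G u, G v⟫ + ⟪u, v⟫ = F v) (hfeas : ∀ v, ⟪σ, G v⟫ + ⟪d, v⟫ = F v) (v : V) :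
    ⟪σ - G u, G v⟫ + ⟪d - u, v⟫ = 0 := by
  rw [inner_sub_left, inner_sub_left]
  linarith [hu v, hfeas v]

theorem prager_synge
    (hu : ∀ v, ⟪G u, G v⟫ + ⟪u, v⟫ = F v) (hfeas : ∀ v, ⟪σ, G v⟫ + ⟪d, v⟫ = F v) (w : V) :
    ‖σ - G w‖ ^ 2 + ‖d - w‖ ^ 2
      = (‖σ - G u‖ ^ 2 + ‖d - u‖ ^ 2) + (‖G (u - w)‖ ^ 2 + ‖u - w‖ ^ 2) := by
  have hσ : σ - G w = (σ - G u) + G (u - w) := by rw [map_sub]; abel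
  have hd : d - w = (d - u) + (u - w) := by abel
  rw [hσ, hd]
  exact norm_add_sq_add_norm_add_sq_of_inner_add_inner_eq_zero
    (inner_residual_add_inner_residual_eq_zero G F hu hfeas (u - w))

end Hypercircle

theorem stmt_12_general {V H : Type*} [NormedAddCommGroup V] [InnerProductSpace ℝ V]
    [NormedAddCommGroup H] [InnerProductSpace ℝ H]
    (G : V →L[ℝ] H) (a : V → V → ℝ)
    (ha : ∀ v w : V, a v w = inner (𝕜 := ℝ) (G v) (G w) + inner (𝕜 := ℝ) v w)
    (F : V →L[ℝ] ℝ) (u : V) (hu : ∀ v : V, a u v = F v) (uh : V)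
    (σ : H) (d : V)
    (hfeas : ∀ v : V, inner (𝕜 := ℝ) σ (G v) + inner (𝕜 := ℝ) d v = F v) :
    a (u - uh) (u - uh) ≤ ‖σ - G uh‖ ^ 2 + ‖d - uh‖ ^ 2 := by
  have hu' : ∀ v, ⟪G u, G v⟫ + ⟪u, v⟫ = F v := fun v => ha u v ▸ hu v
  rw [prager_synge G F hu' hfeas uh, ha, real_inner_self_eq_norm_sq, real_inner_self_eq_norm_sq]
  have hres : 0 ≤ ‖σ - G u‖ ^ 2 + ‖d - u‖ ^ 2 := by positivity
  linarith

/-- Abstract complementary-energy (hypercircle) bound: with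
`a(v,w) = ⟪Gv, Gw⟫ + ⟪v, w⟫`, exact solution `u` of `a(u, ·) = F(·)`,
arbitrary `u_h`, and any equilibrated dual pair `(σ, d)` with
`⟪σ, Gv⟫ + ⟪d, v⟫ = F(v)` for all `v`, the energy error satisfies the fully
computable, constant-free bound
`a(u - u_h, u - u_h) ≤ ‖σ - G u_h‖² + ‖d - u_h‖²`. -/
theorem stmt_12 {V H : Type*} [NormedAddCommGroup V] [InnerProductSpace ℝ V]
    [CompleteSpace V] [NormedAddCommGroup H] [InnerProductSpace ℝ H]
    [CompleteSpace H] (G : V →L[ℝ] H) (a : V → V → ℝ)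
    (ha : ∀ v w : V, a v w = inner (𝕜 := ℝ) (G v) (G w) + inner (𝕜 := ℝ) v w)
    (F : V →L[ℝ] ℝ) (u : V) (hu : ∀ v : V, a u v = F v) (uh : V)
    (σ : H) (d : V)
    (hfeas : ∀ v : V, inner (𝕜 := ℝ) σ (G v) + inner (𝕜 := ℝ) d v = F v) :
    a (u - uh) (u - uh) ≤ ‖σ - G uh‖ ^ 2 + ‖d - uh‖ ^ 2 :=
  stmt_12_general G a ha F u hu uh σ d hfeas
end

section
/- Let V and H be real Hilbert spaces, G : V → H a continuous linear map, a(v, w) := ⟨Gv, Gw⟩_H + ⟨v, w⟩_V, F : V → ℝ a continuous linear functional, u ∈ V the exact solution with a(u, v) = F(v) for all v ∈ V, and u_h ∈ V arbitrary. Consider the set S := {(σ, d) ∈ H × V : ⟨σ, Gv⟩_H + ⟨d, v⟩_V = F(v) for all v ∈ V} of equilibrated dual pairs. Then a(u − u_h, u − u_h) is the least value of the estimator (σ, d) ↦ ‖σ − G u_h‖²_H + ‖d − u_h‖²_V over S, and this least value is attained at σ = G u, d = u; that is, the complementary-energy bound is sharp (strong duality holds). -/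
/-! Hypercircle (Prager–Synge) identity: two equilibrated pairs differ by a pair orthogonal to
the graph `{(G v, v)}` of `G`, in particular to `(G (u - u_h), u - u_h)`. Since `(G u, u)` is
equilibrated, Pythagoras splits the estimator of any equilibrated `(σ, d)` as
`a(u - u_h, u - u_h) + ‖σ - G u‖² + ‖d - u‖²`. -/

open scoped RealInnerProductSpace

section Hypercircle

variable {V H : Type*} [NormedAddCommGroup V] [InnerProductSpace ℝ V]
  [NormedAddCommGroup H] [InnerProductSpace ℝ H]

def IsEquilibrated (G : V →L[ℝ] H) (F : V →L[ℝ] ℝ) (σ : H) (d : V) : Prop :=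
  ∀ v : V, ⟪σ, G v⟫ + ⟪d, v⟫ = F v

theorem IsEquilibrated.inner_sub_add_inner_sub_eq_zero {G : V →L[ℝ] H} {F : V →L[ℝ] ℝ}
    {σ₁ σ₂ : H} {d₁ d₂ : V} (h₁ : IsEquilibrated G F σ₁ d₁) (h₂ : IsEquilibrated G F σ₂ d₂)
    (v : V) : ⟪σ₁ - σ₂, G v⟫ + ⟪d₁ - d₂, v⟫ = 0 := by
  rw [inner_sub_left, inner_sub_left]
  linarith [h₁ v, h₂ v]

theorem norm_sub_sq_add_norm_sub_sq_eq_of_orthogonal (G : V →L[ℝ] H) {σ : H} {d u w : V}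
    (h : ∀ v : V, ⟪σ - G u, G v⟫ + ⟪d - u, v⟫ = 0) :
    ‖σ - G w‖ ^ 2 + ‖d - w‖ ^ 2 =
      (‖G u - G w‖ ^ 2 + ‖u - w‖ ^ 2) + (‖σ - G u‖ ^ 2 + ‖d - u‖ ^ 2) := by
  have horth := h (u - w)
  rw [map_sub] at horth
  rw [show σ - G w = (σ - G u) + (G u - G w) by abel, show d - w = (d - u) + (u - w) by abel,
    norm_add_sq_real, norm_add_sq_real]
  linarith

end Hypercircle

theorem stmt_13_general {V H : Type*} [NormedAddCommGroup V] [InnerProductSpace ℝ V]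
    [NormedAddCommGroup H] [InnerProductSpace ℝ H]
    (G : V →L[ℝ] H) (a : V → V → ℝ)
    (ha : ∀ v w : V, a v w = inner (𝕜 := ℝ) (G v) (G w) + inner (𝕜 := ℝ) v w)
    (F : V →L[ℝ] ℝ) (u : V) (hu : ∀ v : V, a u v = F v) (uh : V) :
    IsLeast
      {e : ℝ | ∃ σ : H, ∃ d : V,
        (∀ v : V, inner (𝕜 := ℝ) σ (G v) + inner (𝕜 := ℝ) d v = F v) ∧
        e = ‖σ - G uh‖ ^ 2 + ‖d - uh‖ ^ 2}
      (a (u - uh) (u - uh)) ∧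
    (∀ v : V, inner (𝕜 := ℝ) (G u) (G v) + inner (𝕜 := ℝ) u v = F v) ∧
    ‖G u - G uh‖ ^ 2 + ‖u - uh‖ ^ 2 = a (u - uh) (u - uh) := by
  have hequ : IsEquilibrated G F (G u) u := fun v => (ha u v).symm.trans (hu v)
  have henergy : ‖G u - G uh‖ ^ 2 + ‖u - uh‖ ^ 2 = a (u - uh) (u - uh) := by
    rw [ha, map_sub, real_inner_self_eq_norm_sq, real_inner_self_eq_norm_sq]
  refine ⟨⟨⟨G u, u, hequ, henergy.symm⟩, ?_⟩, hequ, henergy⟩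
  rintro _ ⟨σ, d, hσd, rfl⟩
  rw [← henergy, norm_sub_sq_add_norm_sub_sq_eq_of_orthogonal G
    (IsEquilibrated.inner_sub_add_inner_sub_eq_zero hσd hequ)]
  exact le_add_of_nonneg_right (by positivity)

/-- Sharpness of the complementary-energy bound (strong duality): the energy
error `a(u - u_h, u - u_h)` is the least value of the estimator
`(σ, d) ↦ ‖σ - G u_h‖² + ‖d - u_h‖²` over the set of equilibrated dual pairs,
and it is attained at `σ = G u`, `d = u`. -/
theorem stmt_13 {V H : Type*} [NormedAddCommGroup V] [InnerProductSpace ℝ V]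
    [CompleteSpace V] [NormedAddCommGroup H] [InnerProductSpace ℝ H]
    [CompleteSpace H] (G : V →L[ℝ] H) (a : V → V → ℝ)
    (ha : ∀ v w : V, a v w = inner (𝕜 := ℝ) (G v) (G w) + inner (𝕜 := ℝ) v w)
    (F : V →L[ℝ] ℝ) (u : V) (hu : ∀ v : V, a u v = F v) (uh : V) :
    IsLeast
      {e : ℝ | ∃ σ : H, ∃ d : V,
        (∀ v : V, inner (𝕜 := ℝ) σ (G v) + inner (𝕜 := ℝ) d v = F v) ∧
        e = ‖σ - G uh‖ ^ 2 + ‖d - uh‖ ^ 2}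
      (a (u - uh) (u - uh)) ∧
    (∀ v : V, inner (𝕜 := ℝ) (G u) (G v) + inner (𝕜 := ℝ) u v = F v) ∧
    ‖G u - G uh‖ ^ 2 + ‖u - uh‖ ^ 2 = a (u - uh) (u - uh) :=
  stmt_13_general G a ha F u hu uh
end
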